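/- arXiv:1910.11232 — 5 statements merged into one kernel-verified Lean document; each statement's English description precedes it below -/
import Mathlib

section
/- For any type of states S, any transition relation R : S → S → Prop, any postcondition P : S → Prop, and any state σ : S, one has box R* P σ ↔ (P σ ∧ box R* (fun τ => P τ → box R P τ) σ), where R* denotes the reflexive transitive closure of R. (Semantic validity of the dL loop induction axiom I: [α*]φ ↔ φ ∧ [α*](φ → [α]φ).) -/
def box {S : Type*} (R : S → S → Prop) (P : S → Prop) (σ : S) : Prop :=
  ∀ τ, R σ τ → P τ

/-! Right to left is induction on the `R*`-path from `σ`; left to right holds because a state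
one `R`-step beyond a reachable state is itself reachable. -/

section

variable {S : Type*} {R : S → S → Prop} {P : S → Prop} {σ : S}

lemma box_reflTransGen_apply_self (h : box (Relation.ReflTransGen R) P σ) : P σ :=
  h σ .refl

lemma box_reflTransGen_box_of_box (h : box (Relation.ReflTransGen R) P σ) :
    box (Relation.ReflTransGen R) (box R P) σ :=
  fun _ hτ ρ hρ => h ρ (hτ.tail hρ)

lemma box_reflTransGen_of_invariant (hP : P σ)
    (hinv : box (Relation.ReflTransGen R) (fun τ => P τ → box R P τ) σ) :
    box (Relation.ReflTransGen R) P σ := by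
  intro τ hτ
  induction hτ with
  | refl => exact hP
  | tail hreach hstep ih => exact hinv _ hreach ih _ hstep

end

theorem dl_induction_axiom {S : Type*} (R : S → S → Prop) (P : S → Prop) (σ : S) :
    box (Relation.ReflTransGen R) P σ ↔
      (P σ ∧ box (Relation.ReflTransGen R) (fun τ => P τ → box R P τ) σ) :=
  ⟨fun h => ⟨box_reflTransGen_apply_self h, fun τ hτ _ => box_reflTransGen_box_of_box h τ hτ⟩,
    fun ⟨hP, hinv⟩ => box_reflTransGen_of_invariant hP hinv⟩
end

section
/- Let E be a real Banach space, F : E → E a Lipschitz map (with some Lipschitz constant K), x₀ : E, and y : ℝ → E a global solution of the ODE with y 0 = x₀ and HasDerivAt y (F (y t)) t for all t : ℝ. Then for every predicate P : E → Prop: [∀ T ≥ 0, for every function φ : ℝ → E with φ 0 = x₀ and HasDerivAt φ (F (φ t)) t for all t ∈ [0, T], P (φ T) holds] if and only if [∀ t ≥ 0, P (y t)]. (Semantic soundness of the dL solution axiom ['] for differential equations: [x'=f(x)]p(x) ↔ ∀t≥0 [x:=y(t)]p(x), using uniqueness of solutions of Lipschitz ODEs.) -/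
open Set

theorem LipschitzWith.eqOn_Icc_of_hasDerivAt {E : Type*} [NormedAddCommGroup E]
    [NormedSpace ℝ E] {F : E → E} {K : NNReal} (hF : LipschitzWith K F) {f g : ℝ → E}
    {a b : ℝ} (hf : ∀ t ∈ Icc a b, HasDerivAt f (F (f t)) t)
    (hg : ∀ t ∈ Icc a b, HasDerivAt g (F (g t)) t) (ha : f a = g a) :
    EqOn f g (Icc a b) :=
  ODE_solution_unique (v := fun _ ↦ F) (fun _ ↦ hF)
    (fun t ht ↦ (hf t ht).continuousAt.continuousWithinAt)
    (fun t ht ↦ (hf t (Ico_subset_Icc_self ht)).hasDerivWithinAt)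
    (fun t ht ↦ (hg t ht).continuousAt.continuousWithinAt)
    (fun t ht ↦ (hg t (Ico_subset_Icc_self ht)).hasDerivWithinAt) ha

theorem dl_solution_axiom_general {E : Type*} [NormedAddCommGroup E] [NormedSpace ℝ E]
    (F : E → E) (K : NNReal) (hF : LipschitzWith K F)
    (x₀ : E) (y : ℝ → E) (hy0 : y 0 = x₀)
    (hy : ∀ t : ℝ, HasDerivAt y (F (y t)) t) (P : E → Prop) :
    (∀ T : ℝ, 0 ≤ T → ∀ φ : ℝ → E, φ 0 = x₀ →
        (∀ t ∈ Set.Icc (0 : ℝ) T, HasDerivAt φ (F (φ t)) t) → P (φ T)) ↔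
    (∀ t : ℝ, 0 ≤ t → P (y t)) := by
  constructor
  · intro h t ht
    exact h t ht y hy0 fun s _ ↦ hy s
  · intro h T hT φ hφ0 hφ
    rw [hF.eqOn_Icc_of_hasDerivAt hφ (fun t _ ↦ hy t) (hφ0.trans hy0.symm) (right_mem_Icc.2 hT)]
    exact h T hT

theorem dl_solution_axiom {E : Type*} [NormedAddCommGroup E] [NormedSpace ℝ E]
    [CompleteSpace E] (F : E → E) (K : NNReal) (hF : LipschitzWith K F)
    (x₀ : E) (y : ℝ → E) (hy0 : y 0 = x₀)
    (hy : ∀ t : ℝ, HasDerivAt y (F (y t)) t) (P : E → Prop) :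
    (∀ T : ℝ, 0 ≤ T → ∀ φ : ℝ → E, φ 0 = x₀ →
        (∀ t ∈ Set.Icc (0 : ℝ) T, HasDerivAt φ (F (φ t)) t) → P (φ T)) ↔
    (∀ t : ℝ, 0 ≤ t → P (y t)) :=
  dl_solution_axiom_general F K hF x₀ y hy0 hy P
end

section
/- Let E be a real Banach space, F : E → E, Q a subset of E, and e, ẽ : E → ℝ differentiable functions such that for every y ∈ Q, the derivative of e at y in the direction F y equals the derivative of ẽ at y in the direction F y (i.e., fderiv ℝ e y (F y) = fderiv ℝ ẽ y (F y)). Then for every T ≥ 0 and every function φ : ℝ → E with HasDerivAt φ (F (φ t)) t and φ t ∈ Q for all t ∈ [0, T], if e (φ 0) = ẽ (φ 0) then e (φ T) = ẽ (φ T). (Semantic soundness of the dL differential invariant proof rule dI for equational postconditions: if Q implies (e)' = (ẽ)' after substituting x' = f(x), then e = ẽ is an invariant of x' = f(x) & Q.) -/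
open Set

theorem HasDerivAt.sub_comp_eq_zero {E G : Type*} [NormedAddCommGroup E] [NormedSpace ℝ E]
    [NormedAddCommGroup G] [NormedSpace ℝ G] {e e₂ : E → G} {φ : ℝ → E} {v : E} {t : ℝ}
    (he : DifferentiableAt ℝ e (φ t)) (he₂ : DifferentiableAt ℝ e₂ (φ t))
    (hφ : HasDerivAt φ v t) (hv : fderiv ℝ e (φ t) v = fderiv ℝ e₂ (φ t) v) :
    HasDerivAt (fun s => e (φ s) - e₂ (φ s)) 0 t := by
  have h := (he.hasFDerivAt.comp_hasDerivAt t hφ).sub (he₂.hasFDerivAt.comp_hasDerivAt t hφ)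
  rwa [hv, sub_self] at h

theorem eq_of_hasDerivAt_zero_Icc {G : Type*} [NormedAddCommGroup G] [NormedSpace ℝ G]
    {g : ℝ → G} {a b : ℝ} (hab : a ≤ b) (hg : ∀ t ∈ Icc a b, HasDerivAt g 0 t) :
    g b = g a :=
  constant_of_has_deriv_right_zero (fun t ht => (hg t ht).continuousAt.continuousWithinAt)
    (fun t ht => (hg t (Ico_subset_Icc_self ht)).hasDerivWithinAt) b (right_mem_Icc.2 hab)

theorem dl_differential_invariant_general {E : Type*} [NormedAddCommGroup E] [NormedSpace ℝ E]
    (F : E → E) (Q : Set E) (e e₂ : E → ℝ)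
    (he : Differentiable ℝ e) (he₂ : Differentiable ℝ e₂)
    (hder : ∀ y ∈ Q, fderiv ℝ e y (F y) = fderiv ℝ e₂ y (F y))
    (T : ℝ) (hT : 0 ≤ T) (φ : ℝ → E)
    (hφ : ∀ t ∈ Set.Icc (0 : ℝ) T, HasDerivAt φ (F (φ t)) t)
    (hQ : ∀ t ∈ Set.Icc (0 : ℝ) T, φ t ∈ Q)
    (h0 : e (φ 0) = e₂ (φ 0)) :
    e (φ T) = e₂ (φ T) := by
  have hgap : ∀ t ∈ Icc 0 T, HasDerivAt (fun s => e (φ s) - e₂ (φ s)) 0 t := fun t ht =>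
    HasDerivAt.sub_comp_eq_zero (he _) (he₂ _) (hφ t ht) (hder _ (hQ t ht))
  have hconst := eq_of_hasDerivAt_zero_Icc hT hgap
  rwa [h0, sub_self, sub_eq_zero] at hconst

theorem dl_differential_invariant {E : Type*} [NormedAddCommGroup E] [NormedSpace ℝ E]
    [CompleteSpace E] (F : E → E) (Q : Set E) (e e₂ : E → ℝ)
    (he : Differentiable ℝ e) (he₂ : Differentiable ℝ e₂)
    (hder : ∀ y ∈ Q, fderiv ℝ e y (F y) = fderiv ℝ e₂ y (F y))
    (T : ℝ) (hT : 0 ≤ T) (φ : ℝ → E)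
    (hφ : ∀ t ∈ Set.Icc (0 : ℝ) T, HasDerivAt φ (F (φ t)) t)
    (hQ : ∀ t ∈ Set.Icc (0 : ℝ) T, φ t ∈ Q)
    (h0 : e (φ 0) = e₂ (φ 0)) :
    e (φ T) = e₂ (φ T) :=
  dl_differential_invariant_general F Q e e₂ he he₂ hder T hT φ hφ hQ h0
end

section
/- Fix reals g > 0 and H. If 0 ≤ x₀, x₀ = H, v₀ = 0, and (x, v) is reachable from (x₀, v₀) by the reflexive transitive closure of the bouncing-ball step relation, then 0 ≤ x and x ≤ H. (Validity of the bouncing-ball safety formula: 0≤x ∧ x=H ∧ v=0 ∧ g>0 ∧ c=1 → [({x'=v, v'=−g & x≥0}; (?x=0; v:=−cv ∪ ?x≠0))*](0≤x ∧ x≤H).) -/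
/-
The energy `v ^ 2 + 2 g x` is conserved along the flow and by the bounce `v := -v`, and every
step ends at a height `x ≥ 0`. Starting at rest from height `H`, the energy is `2 g H`, so
`2 g x ≤ v ^ 2 + 2 g x = 2 g H` bounds every reachable height by `H`.
-/

/-- One iteration of the bouncing-ball loop body with damping coefficient `c = 1`:
follow `x' = v, v' = -g & x ≥ 0` for time `t`, then run `?x=0; v:=-v ∪ ?x≠0`. -/
def bbStep (g : ℝ) : ℝ × ℝ → ℝ × ℝ → Prop := fun (x, v) (x', v') =>
  ∃ t : ℝ, 0 ≤ t ∧ (∀ s ∈ Set.Icc (0 : ℝ) t, x + v * s - (g / 2) * s ^ 2 ≥ 0) ∧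
    ((x + v * t - (g / 2) * t ^ 2 = 0 ∧ x' = x + v * t - (g / 2) * t ^ 2 ∧
        v' = -(v - g * t)) ∨
     (x + v * t - (g / 2) * t ^ 2 ≠ 0 ∧ x' = x + v * t - (g / 2) * t ^ 2 ∧
        v' = v - g * t))

/-- Twice the mechanical energy per unit mass of the state `(x, v)`. -/
def bbEnergy (g : ℝ) (p : ℝ × ℝ) : ℝ := p.2 ^ 2 + 2 * g * p.1

theorem bbStep.fst_nonneg {g : ℝ} {p q : ℝ × ℝ} (h : bbStep g p q) : 0 ≤ q.1 := by
  obtain ⟨t, ht, hflow, ⟨-, hx, -⟩ | ⟨-, hx, -⟩⟩ := h <;>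
    simpa [hx] using hflow t ⟨ht, le_rfl⟩

theorem bbStep.energy_eq {g : ℝ} {p q : ℝ × ℝ} (h : bbStep g p q) :
    bbEnergy g q = bbEnergy g p := by
  obtain ⟨t, -, -, ⟨-, hx, hv⟩ | ⟨-, hx, hv⟩⟩ := h <;>
    · simp only [bbEnergy, hx, hv]
      ring

theorem bbEnergy_eq_of_reflTransGen {g : ℝ} {p q : ℝ × ℝ}
    (h : Relation.ReflTransGen (bbStep g) p q) : bbEnergy g q = bbEnergy g p := by
  induction h with
  | refl => rfl
  | tail _ hstep ih => exact hstep.energy_eq.trans ih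

theorem fst_nonneg_of_reflTransGen {g : ℝ} {p q : ℝ × ℝ} (hp : 0 ≤ p.1)
    (h : Relation.ReflTransGen (bbStep g) p q) : 0 ≤ q.1 := by
  rcases h.cases_tail with rfl | ⟨_, -, hstep⟩
  exacts [hp, hstep.fst_nonneg]

theorem bouncing_ball_safety (g H : ℝ) (hg : g > 0) (x₀ v₀ x v : ℝ)
    (hx₀ : 0 ≤ x₀) (hH : x₀ = H) (hv₀ : v₀ = 0)
    (hreach : Relation.ReflTransGen (bbStep g) (x₀, v₀) (x, v)) :
    0 ≤ x ∧ x ≤ H := by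
  subst hH hv₀
  have henergy : v ^ 2 + 2 * g * x = 2 * g * x₀ := by
    simpa [bbEnergy] using bbEnergy_eq_of_reflTransGen hreach
  refine ⟨fst_nonneg_of_reflTransGen hx₀ hreach, ?_⟩
  nlinarith [sq_nonneg v]
end

section
/- Fix a real g > 0. For all reals x, v, x⁺, v⁺: (x, v) step (x⁺, v⁺) if and only if 2·g·(x⁺ − x) = v² − (v⁺)² ∧ x ≥ 0 ∧ ((x⁺ > 0 ∧ v⁺ ≤ v) ∨ (x⁺ = 0 ∧ v⁺ ≥ −v)). (Correctness of the ModelPlex model monitor for the bouncing ball: the monitor formula exactly characterizes the transitions of one iteration of the bouncing-ball loop body.) -/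
lemma energy_conservation (g x v t : ℝ) :
    2 * g * ((x + v * t - (g / 2) * t ^ 2) - x) = v ^ 2 - (v - g * t) ^ 2 := by
  ring

lemma height_nonneg_of_endpoints {g x v t : ℝ} (hg : 0 ≤ g) (hx : 0 ≤ x)
    (ht : 0 ≤ x + v * t - (g / 2) * t ^ 2) :
    ∀ s ∈ Set.Icc (0 : ℝ) t, 0 ≤ x + v * s - (g / 2) * s ^ 2 := by
  rintro s ⟨hs0, hst⟩
  rcases hs0.eq_or_lt with rfl | hs
  · simpa using hx
  -- the parabola minus its chord over `[0, t]` is `(g / 2) s (t - s)`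
  have chord : t * (x + v * s - (g / 2) * s ^ 2) =
      (t - s) * x + s * (x + v * t - (g / 2) * t ^ 2) + (g / 2) * s * t * (t - s) := by
    ring
  have hts : 0 ≤ t - s := sub_nonneg.2 hst
  refine nonneg_of_mul_nonneg_right ?_ (hs.trans_le hst)
  rw [chord]
  have hgs : 0 ≤ (g / 2) * s * t :=
    mul_nonneg (mul_nonneg (div_nonneg hg zero_le_two) hs.le) (hs.le.trans hst)
  exact add_nonneg (add_nonneg (mul_nonneg hts hx) (mul_nonneg hs.le ht)) (mul_nonneg hgs hts)

lemma exists_flow_time_of_energy {g x v x' w : ℝ} (hg : 0 < g)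
    (henergy : 2 * g * (x' - x) = v ^ 2 - w ^ 2) (hw : w ≤ v) :
    ∃ t, 0 ≤ t ∧ v - g * t = w ∧ x + v * t - (g / 2) * t ^ 2 = x' := by
  have hvel : v - g * ((v - w) / g) = w := by field_simp; ring
  refine ⟨(v - w) / g, div_nonneg (sub_nonneg.2 hw) hg.le, hvel, ?_⟩
  have h := energy_conservation g x v ((v - w) / g)
  rw [hvel, ← henergy] at h
  linarith [mul_left_cancel₀ (mul_ne_zero two_ne_zero hg.ne') h]

theorem bouncing_ball_model_monitor (g : ℝ) (hg : g > 0) (x v x' v' : ℝ) :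
    bbStep g (x, v) (x', v') ↔
      (2 * g * (x' - x) = v ^ 2 - v' ^ 2 ∧ x ≥ 0 ∧
        ((x' > 0 ∧ v' ≤ v) ∨ (x' = 0 ∧ v' ≥ -v))) := by
  constructor
  · rintro ⟨t, ht, hflow, hjump⟩
    have hx : x ≥ 0 := by simpa using hflow 0 ⟨le_rfl, ht⟩
    have hgt : 0 ≤ g * t := mul_nonneg hg.le ht
    rcases hjump with ⟨hland, rfl, rfl⟩ | ⟨hfly, rfl, rfl⟩
    · exact ⟨by rw [neg_sq]; exact energy_conservation g x v t, hx, Or.inr ⟨hland, by linarith⟩⟩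
    · exact ⟨energy_conservation g x v t, hx,
        Or.inl ⟨(hflow t ⟨ht, le_rfl⟩).lt_of_ne' hfly, by linarith⟩⟩
  · rintro ⟨henergy, hx, ⟨hpos, hle⟩ | ⟨rfl, hge⟩⟩
    · obtain ⟨t, ht, hvel, hheight⟩ := exists_flow_time_of_energy hg henergy hle
      exact ⟨t, ht, height_nonneg_of_endpoints hg.le hx (hheight ▸ hpos.le),
        Or.inr ⟨hheight ▸ hpos.ne', hheight.symm, hvel.symm⟩⟩
    · have henergy' : 2 * g * (0 - x) = v ^ 2 - (-v') ^ 2 := by rwa [neg_sq]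
      obtain ⟨t, ht, hvel, hheight⟩ := exists_flow_time_of_energy hg henergy' (by linarith)
      exact ⟨t, ht, height_nonneg_of_endpoints hg.le hx hheight.ge,
        Or.inl ⟨hheight, hheight.symm, by rw [hvel, neg_neg]⟩⟩
end
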